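/- Let m ≥ 2 be an integer with prime factorization m = p_1^{r_1} p_2^{r_2} ⋯ p_j^{r_j}, let G be a finite commutative group, and set m_i = m / p_i^{r_i}. Let s_i be a natural number with s_i·m_i ≡ 1 (mod p_i^{r_i}) for each i. Suppose f_1, ..., f_j are elements of the group ring ℤ_m G such that for each i the reduction of f_i modulo p_i is a unit of ℤ_{p_i}G, and let g_i ∈ ℤ_m G be such that the reduction of f_i·g_i modulo p_i is 1 in ℤ_{p_i}G. Then f = s_1 m_1 f_1 + s_2 m_2 f_2 + ⋯ + s_j m_j f_j is a unit in ℤ_m G, with f^{-1} = s_1 m_1 g_1^{α_1} f_1^{α_1−1} + ⋯ + s_j m_j g_j^{α_j} f_j^{α_j−1}, where α_i = p_i^{r_i−1}. Moreover, |(ℤ_m G)*| = (m/(p_1 p_2 ⋯ p_j))^{|G|} · |(ℤ_{p_1}G)*| · |(ℤ_{p_2}G)*| ⋯ |(ℤ_{p_j}G)*|. -/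

import Mathlib

/-!
Reduction modulo the pairwise coprime factors `p i ^ r i` is a ring isomorphism
`ℤ_m G ≅ ∏ i, ℤ_{p_i^{r_i}} G`: it is injective coefficientwise by the Chinese remainder theorem,
and both sides have `m ^ |G|` elements. Under it `s_i m_i` becomes the `i`-th standard idempotent,
so both claims reduce to a single prime power `p ^ r`. There the kernel of `ℤ_{p^r} G → ℤ_p G`
consists of multiples of `p`. Hence `f g ≡ 1 (mod p)` gives `(f g) ^ p ^ (r - 1) ≡ 1 (mod p ^ r)`,
which is the inverse formula; and the kernel is nilpotent, so the reduction maps units onto units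
with kernel `1 + ker`, of size `p ^ ((r - 1) |G|)`.
-/

open MonoidAlgebra in
noncomputable def zmodGroupRingReduce (m n : ℕ) (h : n ∣ m) (G : Type*) [CommGroup G] :
    MonoidAlgebra (ZMod m) G →+* MonoidAlgebra (ZMod n) G :=
  liftNCRingHom (singleOneRingHom.comp (ZMod.castHom h (ZMod n))) (of (ZMod n) G)
    (fun _ _ => Commute.all _ _)

namespace MonoidAlgebra

variable {R M : Type*}

theorem algebraMap_injective [CommSemiring R] [Monoid M] :
    Function.Injective (algebraMap R (MonoidAlgebra R M)) := fun a b h => by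
  simpa using congrArg (coeff · 1) h

instance charP [CommSemiring R] [Monoid M] (p : ℕ) [CharP R p] : CharP (MonoidAlgebra R M) p :=
  charP_of_injective_algebraMap algebraMap_injective p

instance finite [Semiring R] [Finite R] [Finite M] : Finite (MonoidAlgebra R M) :=
  .of_equiv _ (coeffEquiv.trans Finsupp.equivFunOnFinite).symm

theorem natCard_eq_pow [Semiring R] [Finite M] :
    Nat.card (MonoidAlgebra R M) = Nat.card R ^ Nat.card M := by
  rw [Nat.card_congr (coeffEquiv.trans Finsupp.equivFunOnFinite), Nat.card_fun]

end MonoidAlgebra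

namespace RingHom

variable {R S : Type*} [CommRing R] [CommRing S] {ψ : R →+* S}

theorem isLocalHom_of_isNilpotent_ker (hψ : Function.Surjective ψ)
    (hnil : ∀ x ∈ RingHom.ker ψ, IsNilpotent x) : IsLocalHom ψ := by
  refine ⟨fun x hx => ?_⟩
  obtain ⟨y, hy⟩ := hψ ↑hx.unit⁻¹
  have hxy : x * y - 1 ∈ RingHom.ker ψ := by
    rw [RingHom.mem_ker, map_sub, map_mul, hy, map_one, IsUnit.mul_val_inv, sub_self]
  have : IsUnit (x * y) := by simpa using (hnil _ hxy).isUnit_one_add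
  exact isUnit_of_mul_isUnit_left this

theorem units_map_surjective_of_isNilpotent_ker (hψ : Function.Surjective ψ)
    (hnil : ∀ x ∈ RingHom.ker ψ, IsNilpotent x) :
    Function.Surjective (Units.map (ψ : R →* S)) := by
  have := ψ.isLocalHom_of_isNilpotent_ker hψ hnil
  intro u
  obtain ⟨x, hx⟩ := hψ u
  exact ⟨(isUnit_of_map_unit ψ x (hx ▸ u.isUnit)).unit, Units.ext hx⟩

noncomputable def unitsMapKerEquivKer (hnil : ∀ x ∈ RingHom.ker ψ, IsNilpotent x) :
    (Units.map (ψ : R →* S)).ker ≃ RingHom.ker ψ :=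
  Equiv.ofBijective (fun u => ⟨(u : Rˣ) - 1, by
      have hu : ψ (u : Rˣ) = 1 := congrArg Units.val u.2
      rw [RingHom.mem_ker, map_sub, hu, map_one, sub_self]⟩)
    ⟨fun u v huv => Subtype.ext <| Units.ext <| by simpa using congrArg Subtype.val huv,
     fun ⟨x, hx⟩ => by
      have hunit := (hnil x hx).isUnit_one_add
      refine ⟨⟨hunit.unit, Units.ext ?_⟩, Subtype.ext ?_⟩
      · simp [(RingHom.mem_ker).1 hx]
      · simp⟩

theorem card_units_mul_card_eq_of_isNilpotent_ker (hψ : Function.Surjective ψ)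
    (hnil : ∀ x ∈ RingHom.ker ψ, IsNilpotent x) :
    Nat.card Rˣ * Nat.card S = Nat.card R * Nat.card Sˣ := by
  have hunits : Nat.card Rˣ = Nat.card Sˣ * Nat.card (RingHom.ker ψ) := by
    rw [Subgroup.card_eq_card_quotient_mul_card_subgroup (Units.map (ψ : R →* S)).ker,
      Nat.card_congr (QuotientGroup.quotientKerEquivOfSurjective _
        (units_map_surjective_of_isNilpotent_ker hψ hnil)).toEquiv,
      Nat.card_congr (unitsMapKerEquivKer hnil)]
  have hring : Nat.card R = Nat.card S * Nat.card (RingHom.ker ψ) := by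
    rw [Submodule.card_eq_card_quotient_mul_card (RingHom.ker ψ),
      Nat.card_congr (RingHom.quotientKerEquivOfSurjective hψ).toEquiv, mul_comm]
  rw [hunits, hring]
  ring

end RingHom

section Reduce

variable {G : Type*} [CommGroup G]

theorem zmodGroupRingReduce_eq_mapRingHom (m n : ℕ) (h : n ∣ m) :
    zmodGroupRingReduce m n h G = MonoidAlgebra.mapRingHom G (ZMod.castHom h (ZMod n)) := by
  ext <;> simp [zmodGroupRingReduce]

theorem zmodGroupRingReduce_surjective (m n : ℕ) (h : n ∣ m) :
    Function.Surjective (zmodGroupRingReduce m n h G) := by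
  rw [zmodGroupRingReduce_eq_mapRingHom, MonoidAlgebra.coe_mapRingHom]
  exact MonoidAlgebra.map_surjective _ (ZMod.castHom_surjective h)

theorem zmodGroupRingReduce_zmodGroupRingReduce {m q n : ℕ} (h₁ : q ∣ m) (h₂ : n ∣ q)
    (x : MonoidAlgebra (ZMod m) G) :
    zmodGroupRingReduce q n h₂ G (zmodGroupRingReduce m q h₁ G x) =
      zmodGroupRingReduce m n (h₂.trans h₁) G x := by
  simp only [zmodGroupRingReduce_eq_mapRingHom, ← RingHom.comp_apply,
    ← MonoidAlgebra.mapRingHom_comp, ZMod.castHom_comp]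

theorem ZMod.natCast_dvd_of_castHom_eq_zero {q n : ℕ} [NeZero q] (h : n ∣ q) {a : ZMod q}
    (ha : ZMod.castHom h (ZMod n) a = 0) : (n : ZMod q) ∣ a := by
  rw [ZMod.castHom_apply, ← ZMod.natCast_val, ZMod.natCast_eq_zero_iff] at ha
  obtain ⟨k, hk⟩ := ha
  exact ⟨k, by rw [← ZMod.natCast_zmod_val a, hk, Nat.cast_mul]⟩

theorem natCast_dvd_of_zmodGroupRingReduce_eq_zero {q n : ℕ} [NeZero q] (h : n ∣ q)
    {x : MonoidAlgebra (ZMod q) G} (hx : zmodGroupRingReduce q n h G x = 0) :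
    (n : MonoidAlgebra (ZMod q) G) ∣ x := by
  rw [← MonoidAlgebra.sum_coeff_single x]
  refine Finset.dvd_sum fun γ _ => ?_
  have hγ : ZMod.castHom h (ZMod n) (x.coeff γ) = 0 := by
    rw [← MonoidAlgebra.coeff_mapRingHom, ← zmodGroupRingReduce_eq_mapRingHom, hx]
    rfl
  obtain ⟨c, hc⟩ := ZMod.natCast_dvd_of_castHom_eq_zero h hγ
  exact ⟨MonoidAlgebra.single γ c, by
    rw [hc, MonoidAlgebra.natCast_def, MonoidAlgebra.single_mul_single, one_mul]⟩

end Reduce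

section PrimePower

variable {G : Type*} [CommGroup G] {p r : ℕ} [NeZero p]

theorem isNilpotent_of_zmodGroupRingReduce_eq_zero (h : p ∣ p ^ r)
    {x : MonoidAlgebra (ZMod (p ^ r)) G} (hx : zmodGroupRingReduce (p ^ r) p h G x = 0) :
    IsNilpotent x := by
  obtain ⟨c, rfl⟩ := natCast_dvd_of_zmodGroupRingReduce_eq_zero h hx
  exact ⟨r, by rw [mul_pow, ← Nat.cast_pow, CharP.cast_eq_zero, zero_mul]⟩

theorem pow_eq_one_of_zmodGroupRingReduce_eq_one (hr : r ≠ 0) (h : p ∣ p ^ r)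
    {y : MonoidAlgebra (ZMod (p ^ r)) G} (hy : zmodGroupRingReduce (p ^ r) p h G y = 1) :
    y ^ p ^ (r - 1) = 1 := by
  have hdvd : (p : MonoidAlgebra (ZMod (p ^ r)) G) ∣ y - 1 :=
    natCast_dvd_of_zmodGroupRingReduce_eq_zero h (by rw [map_sub, hy, map_one, sub_self])
  have := dvd_sub_pow_of_dvd_sub hdvd (r - 1)
  rwa [Nat.sub_add_cancel (Nat.one_le_iff_ne_zero.2 hr), ← Nat.cast_pow, CharP.cast_eq_zero,
    zero_dvd_iff, one_pow, sub_eq_zero] at this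

theorem zmodGroupRingReduce_mul_pow_eq_one {m : ℕ} (hr : r ≠ 0) (hp : p ∣ m) (hpr : p ^ r ∣ m)
    {a b : MonoidAlgebra (ZMod m) G} (hab : zmodGroupRingReduce m p hp G (a * b) = 1) :
    zmodGroupRingReduce m (p ^ r) hpr G (a * (b ^ p ^ (r - 1) * a ^ (p ^ (r - 1) - 1))) = 1 := by
  have hα : a * (b ^ p ^ (r - 1) * a ^ (p ^ (r - 1) - 1)) = (a * b) ^ p ^ (r - 1) := by
    rw [mul_pow, mul_comm (b ^ _), ← mul_assoc, ← pow_succ',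
      Nat.sub_add_cancel (Nat.one_le_pow _ _ (Nat.pos_of_neZero p))]
  rw [hα, map_pow]
  refine pow_eq_one_of_zmodGroupRingReduce_eq_one hr (dvd_pow_self p hr) ?_
  rw [zmodGroupRingReduce_zmodGroupRingReduce]
  exact hab

theorem card_units_zmodGroupRing_pow [Finite G] (hr : r ≠ 0) :
    Nat.card (MonoidAlgebra (ZMod (p ^ r)) G)ˣ =
      (p ^ (r - 1)) ^ Nat.card G * Nat.card (MonoidAlgebra (ZMod p) G)ˣ := by
  have h : p ∣ p ^ r := dvd_pow_self p hr
  have key := RingHom.card_units_mul_card_eq_of_isNilpotent_ker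
    (zmodGroupRingReduce_surjective (G := G) _ _ h)
    (fun _ hx => isNilpotent_of_zmodGroupRingReduce_eq_zero h hx)
  have hcard : (p ^ r) ^ Nat.card G = (p ^ (r - 1)) ^ Nat.card G * p ^ Nat.card G := by
    rw [← mul_pow, pow_sub_one_mul hr]
  rw [MonoidAlgebra.natCard_eq_pow, MonoidAlgebra.natCard_eq_pow, Nat.card_zmod, Nat.card_zmod,
    hcard, mul_right_comm] at key
  exact Nat.eq_of_mul_eq_mul_right (pow_pos (Nat.pos_of_neZero p) _) key

end PrimePower

theorem map_sum_nsmul_eq_of_natCast {ι A B F : Type*} [Fintype ι] [Semiring A] [Semiring B]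
    [FunLike F A B] [RingHomClass F A B] (φ : F) (e : ι → ℕ) (x : ι → A) {i : ι}
    (hi : (e i : B) = 1) (hk : ∀ k ≠ i, (e k : B) = 0) :
    φ (∑ k, e k • x k) = φ (x i) := by
  rw [map_sum, Finset.sum_eq_single i
    (fun k _ hki => by rw [map_nsmul, nsmul_eq_mul, hk k hki, zero_mul]) (by simp),
    map_nsmul, nsmul_eq_mul, hi, one_mul]

section CRT

open Function

variable {ι : Type*} [Fintype ι] {q : ι → ℕ} (G : Type*) [CommGroup G]

theorem zmodGroupRingReduce_pi_bijective (hq : Pairwise (Nat.Coprime on q)) [∀ i, NeZero (q i)]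
    [Finite G] :
    Bijective (RingHom.pi fun i =>
      zmodGroupRingReduce (∏ i, q i) (q i) (Finset.dvd_prod_of_mem q (Finset.mem_univ i)) G) := by
  refine Injective.bijective_of_nat_card_le (fun x y hxy => ?_) ?_
  · ext γ
    refine (ZMod.prodEquivPi q hq).injective (funext fun i => ?_)
    simpa only [RingHom.pi_apply, zmodGroupRingReduce_eq_mapRingHom,
      MonoidAlgebra.coeff_mapRingHom, ZMod.prodEquivPi_apply]
      using congrArg (fun F => (F i).coeff γ) hxy
  · simp only [Nat.card_pi, MonoidAlgebra.natCard_eq_pow, Nat.card_zmod, Finset.prod_pow, le_refl]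

theorem card_units_zmodGroupRing_prod (hq : Pairwise (Nat.Coprime on q)) [∀ i, NeZero (q i)]
    [Finite G] :
    Nat.card (MonoidAlgebra (ZMod (∏ i, q i)) G)ˣ =
      ∏ i, Nat.card (MonoidAlgebra (ZMod (q i)) G)ˣ := by
  let e := RingEquiv.ofBijective _ (zmodGroupRingReduce_pi_bijective G hq)
  rw [Nat.card_congr ((Units.mapEquiv e.toMulEquiv).trans MulEquiv.piUnits).toEquiv, Nat.card_pi]

theorem dvd_prod_div_of_ne (hq : ∀ i, q i ≠ 0) {i k : ι} (hik : i ≠ k) :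
    q i ∣ (∏ l, q l) / q k := by
  classical
  rw [← Finset.prod_erase_mul _ _ (Finset.mem_univ k),
    Nat.mul_div_cancel _ (Nat.pos_of_ne_zero (hq k))]
  exact Finset.dvd_prod_of_mem q (Finset.mem_erase.2 ⟨hik, Finset.mem_univ i⟩)

theorem zmodGroupRingReduce_sum_nsmul_crt (hq : ∀ i, q i ≠ 0) {s : ι → ℕ}
    (hs : ∀ i, s i * ((∏ l, q l) / q i) ≡ 1 [MOD q i])
    (x : ι → MonoidAlgebra (ZMod (∏ i, q i)) G) (i : ι) :
    zmodGroupRingReduce (∏ k, q k) (q i) (Finset.dvd_prod_of_mem q (Finset.mem_univ i)) G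
        (∑ k, (s k * ((∏ l, q l) / q k)) • x k) =
      zmodGroupRingReduce (∏ k, q k) (q i) (Finset.dvd_prod_of_mem q (Finset.mem_univ i)) G
        (x i) := by
  refine map_sum_nsmul_eq_of_natCast _ _ x ?_ fun k hki => ?_
  · rw [← Nat.cast_one, CharP.natCast_eq_natCast _ (q i)]
    exact hs i
  · rw [CharP.cast_eq_zero_iff _ (q i)]
    exact (dvd_prod_div_of_ne hq hki.symm).mul_left _

end CRT

theorem Finset.prod_pow_div_prod {ι : Type*} (s : Finset ι) (p r : ι → ℕ)
    (hp : ∀ i ∈ s, p i ≠ 0) (hr : ∀ i ∈ s, r i ≠ 0) :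
    (∏ i ∈ s, p i ^ r i) / ∏ i ∈ s, p i = ∏ i ∈ s, p i ^ (r i - 1) := by
  refine Nat.div_eq_of_eq_mul_left (Finset.prod_pos fun i hi => Nat.pos_of_ne_zero (hp i hi)) ?_
  rw [← Finset.prod_mul_distrib]
  exact Finset.prod_congr rfl fun i hi => (pow_sub_one_mul (hr i hi) _).symm

theorem zmod_groupRing_unit_crt_general {G : Type*} [CommGroup G] [Finite G]
    (m : ℕ) (j : ℕ) (p r : Fin j → ℕ)
    (hp : ∀ i, (p i).Prime) (hpinj : Function.Injective p)
    (hr : ∀ i, 1 ≤ r i) (hm : m = ∏ i, p i ^ r i)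
    (hdvd : ∀ i, p i ∣ m)
    (s : Fin j → ℕ) (hs : ∀ i, s i * (m / p i ^ r i) ≡ 1 [MOD p i ^ r i])
    (f g : Fin j → MonoidAlgebra (ZMod m) G)
    (hg : ∀ i, zmodGroupRingReduce m (p i) (hdvd i) G (f i * g i) = 1) :
    IsUnit (∑ i, (s i * (m / p i ^ r i)) • f i) ∧
    (∑ i, (s i * (m / p i ^ r i)) • f i) *
      (∑ i, (s i * (m / p i ^ r i)) •
        (g i ^ (p i ^ (r i - 1)) * f i ^ (p i ^ (r i - 1) - 1))) = 1 ∧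
    Nat.card (MonoidAlgebra (ZMod m) G)ˣ =
      (m / ∏ i, p i) ^ Nat.card G * ∏ i, Nat.card (MonoidAlgebra (ZMod (p i)) G)ˣ := by
  subst hm
  have : ∀ i, NeZero (p i) := fun i => ⟨(hp i).ne_zero⟩
  have hr₀ : ∀ i, r i ≠ 0 := fun i => Nat.one_le_iff_ne_zero.1 (hr i)
  have hq₀ : ∀ i, p i ^ r i ≠ 0 := fun i => pow_ne_zero _ (hp i).ne_zero
  have hcop : Pairwise (Function.onFun Nat.Coprime fun i => p i ^ r i) := fun i k hik =>
    .pow _ _ ((Nat.coprime_primes (hp i) (hp k)).2 (hpinj.ne hik))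
  refine ⟨.of_mul_eq_one _ ?inv, ?inv, ?_⟩
  case inv =>
    refine (zmodGroupRingReduce_pi_bijective G hcop).1 (funext fun i => ?_)
    rw [RingHom.pi_apply, RingHom.pi_apply, map_mul, map_one,
      zmodGroupRingReduce_sum_nsmul_crt G hq₀ hs, zmodGroupRingReduce_sum_nsmul_crt G hq₀ hs,
      ← map_mul]
    exact zmodGroupRingReduce_mul_pow_eq_one (hr₀ i) (hdvd i) _ (hg i)
  rw [card_units_zmodGroupRing_prod G hcop,
    Finset.prod_congr rfl fun i _ => card_units_zmodGroupRing_pow (hr₀ i),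
    Finset.prod_mul_distrib, Finset.prod_pow,
    Finset.prod_pow_div_prod _ _ _ (fun i _ => (hp i).ne_zero) (fun i _ => hr₀ i)]

/-- Let `m ≥ 2` with prime factorization `m = ∏ i, p i ^ r i`,
`G` a finite commutative group, `mᵢ = m / p i ^ r i`, and `s i` natural numbers
with `s i * mᵢ ≡ 1 (mod p i ^ r i)`.  If `f i ∈ ℤ_m G` have unit reductions
modulo `p i`, with `g i` reducing to inverses of `f i` modulo `p i`, then
`F = ∑ i, (s i * mᵢ) • f i` is a unit of `ℤ_m G` whose inverse is
`∑ i, (s i * mᵢ) • (g i ^ αᵢ * f i ^ (αᵢ - 1))` with `αᵢ = p i ^ (r i - 1)`;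
moreover `|(ℤ_m G)ˣ| = (m / ∏ i, p i) ^ |G| * ∏ i, |(ℤ_{p i} G)ˣ|`. -/
theorem zmod_groupRing_unit_crt {G : Type*} [CommGroup G] [Finite G]
    (m : ℕ) (hm2 : 2 ≤ m) (j : ℕ) (p r : Fin j → ℕ)
    (hp : ∀ i, (p i).Prime) (hpinj : Function.Injective p)
    (hr : ∀ i, 1 ≤ r i) (hm : m = ∏ i, p i ^ r i)
    (hdvd : ∀ i, p i ∣ m)
    (s : Fin j → ℕ) (hs : ∀ i, s i * (m / p i ^ r i) ≡ 1 [MOD p i ^ r i])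
    (f g : Fin j → MonoidAlgebra (ZMod m) G)
    (hf : ∀ i, IsUnit (zmodGroupRingReduce m (p i) (hdvd i) G (f i)))
    (hg : ∀ i, zmodGroupRingReduce m (p i) (hdvd i) G (f i * g i) = 1) :
    IsUnit (∑ i, (s i * (m / p i ^ r i)) • f i) ∧
    (∑ i, (s i * (m / p i ^ r i)) • f i) *
      (∑ i, (s i * (m / p i ^ r i)) •
        (g i ^ (p i ^ (r i - 1)) * f i ^ (p i ^ (r i - 1) - 1))) = 1 ∧
    Nat.card (MonoidAlgebra (ZMod m) G)ˣ =
      (m / ∏ i, p i) ^ Nat.card G * ∏ i, Nat.card (MonoidAlgebra (ZMod (p i)) G)ˣ :=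
  zmod_groupRing_unit_crt_general m j p r hp hpinj hr hm hdvd s hs f g hg
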